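/- arXiv:1609.00292 — 4 statements merged into one kernel-verified Lean document; each statement's English description precedes it below -/
import Mathlib

section
/- Let X be a random variable with values in [0,1], mean μ > 1/2, and variance σ^2, and assume Pr(X < μ - 1/2) = 0. Then for every r with 0 < r < σ, we have Pr(|X - μ| ≥ r) ≥ 2√3 (σ^2 - r^2) / (1 - 4r^2). -/
open MeasureTheory ProbabilityTheory

theorem stmt_4 {Ω : Type*} [MeasurableSpace Ω] (μ : Measure Ω) [IsProbabilityMeasure μ]
    (X : Ω → ℝ) (hX : Measurable X) (hrange : ∀ ω, X ω ∈ Set.Icc (0:ℝ) 1)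
    (m σ : ℝ) (hm : m = ∫ ω, X ω ∂μ) (hm2 : 1/2 < m)
    (hσ : 0 < σ) (hvar : variance X μ = σ^2)
    (hlow : μ {ω | X ω < m - 1/2} = 0)
    (r : ℝ) (hr0 : 0 < r) (hrσ : r < σ) :
    (μ {ω | r ≤ |X ω - m|}).toReal ≥ 2 * Real.sqrt 3 * (σ^2 - r^2) / (1 - 4*r^2) := by
  -- a.e. lower bound on X
  have hae : ∀ᵐ ω ∂μ, m - 1/2 ≤ X ω := by
    have : ∀ᵐ ω ∂μ, ¬ (X ω < m - 1/2) := by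
      rw [ae_iff]; simp only [not_not]; exact hlow
    filter_upwards [this] with ω h using not_lt.mp h
  have hup : ∀ ω, X ω - m ≤ 1/2 := fun ω => by
    have := (hrange ω).2; linarith
  have haeabs : ∀ᵐ ω ∂μ, |X ω - m| ≤ 1/2 := by
    filter_upwards [hae] with ω h
    rw [abs_le]; constructor <;> [linarith; exact hup ω]
  -- Memℒp 2
  have hXm : MemLp X 2 μ := by
    refine MemLp.of_bound hX.aestronglyMeasurable 1 (ae_of_all _ fun ω => ?_)
    have h := hrange ω
    rw [Real.norm_eq_abs, abs_le]; exact ⟨by linarith [h.1], h.2⟩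
  have hmX : m = μ[X] := hm
  -- f = (X - m)^2
  set f : Ω → ℝ := fun ω => (X ω - m)^2 with hf
  have hfmeas : Measurable f := ((hX.sub measurable_const).pow measurable_const)
  have hfint : Integrable f μ := by
    refine (memLp_one_iff_integrable.mp ?_)
    refine MemLp.of_bound hfmeas.aestronglyMeasurable 4 (ae_of_all _ fun ω => ?_)
    have h := hrange ω
    have hm1 : m ≤ 1 := by
      rw [hm]
      calc ∫ ω, X ω ∂μ ≤ ∫ _, (1:ℝ) ∂μ := by
            refine integral_mono ?_ (integrable_const 1) (fun ω => (hrange ω).2)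
            exact hXm.integrable one_le_two
        _ = 1 := by simp
    have : |X ω - m| ≤ 1 := by rw [abs_le]; constructor <;> nlinarith [h.1, h.2]
    rw [Real.norm_eq_abs, abs_of_nonneg (sq_nonneg _)]
    calc f ω = |X ω - m|^2 := (sq_abs _).symm
      _ ≤ 1^2 := by gcongr
      _ ≤ 4 := by norm_num
  have hvar' : σ^2 = ∫ ω, f ω ∂μ := by
    rw [← hvar, variance_eq_integral hX.aemeasurable]
    congr 1
    ext ω
    simp [f, ← hmX]
  set A : Set Ω := {ω | r ≤ |X ω - m|} with hA
  have hAmeas : MeasurableSet A := by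
    apply measurableSet_le measurable_const ((hX.sub measurable_const).abs)
  set P := (μ A).toReal with hP
  have hP1 : P ≤ 1 := by
    rw [hP]; exact ENNReal.toReal_le_of_le_ofReal one_pos.le (by simpa using prob_le_one)
  have hP0 : 0 ≤ P := ENNReal.toReal_nonneg
  -- split integral
  have hsplit : ∫ ω, f ω ∂μ = ∫ ω in A, f ω ∂μ + ∫ ω in Aᶜ, f ω ∂μ :=
    (integral_add_compl hAmeas hfint).symm
  have hintA : ∫ ω in A, f ω ∂μ ≤ (1/4) * P := by
    have : ∫ ω in A, f ω ∂μ ≤ ∫ _ in A, (1/4 : ℝ) ∂μ := by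
      refine integral_mono_ae hfint.integrableOn (integrable_const _) ?_
      refine ae_restrict_of_ae ?_
      filter_upwards [haeabs] with ω h
      calc f ω = |X ω - m|^2 := (sq_abs _).symm
        _ ≤ (1/2)^2 := by gcongr
        _ = 1/4 := by norm_num
    simpa [Measure.restrict_apply_univ, hP, mul_comm, Measure.real] using this
  have hcompl : (μ Aᶜ).toReal = 1 - P := by
    rw [measure_compl hAmeas (measure_ne_top _ _)]
    rw [ENNReal.toReal_sub_of_le (by simpa using prob_le_one) (by simp)]
    simp [hP]
  have hintAc : ∫ ω in Aᶜ, f ω ∂μ ≤ r^2 * (1 - P) := by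
    have : ∫ ω in Aᶜ, f ω ∂μ ≤ ∫ _ in Aᶜ, (r^2 : ℝ) ∂μ := by
      refine integral_mono_ae hfint.integrableOn (integrable_const _) ?_
      refine ae_restrict_of_forall_mem hAmeas.compl fun ω hω => ?_
      have : |X ω - m| < r := by
        simpa [A] using hω
      calc f ω = |X ω - m|^2 := (sq_abs _).symm
        _ ≤ r^2 := by gcongr
    simpa [Measure.real, hcompl, mul_comm] using this
  have hkey : σ^2 ≤ (1/4) * P + r^2 * (1 - P) := by
    rw [hvar', hsplit]; exact add_le_add hintA hintAc
  -- σ² ≤ 1/4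
  have hσ4 : σ^2 ≤ 1/4 := by
    rw [hvar']
    calc ∫ ω, f ω ∂μ ≤ ∫ _, (1/4:ℝ) ∂μ := by
          refine integral_mono_ae hfint (integrable_const _) ?_
          filter_upwards [haeabs] with ω h
          calc f ω = |X ω - m|^2 := (sq_abs _).symm
            _ ≤ (1/2)^2 := by gcongr
            _ = 1/4 := by norm_num
      _ = 1/4 := by simp
  have hr4 : 0 < 1 - 4*r^2 := by nlinarith
  have hsqrt3 : Real.sqrt 3 ≤ 2 := by
    rw [show (2:ℝ) = Real.sqrt 4 by rw [show (4:ℝ) = 2^2 by norm_num, Real.sqrt_sq]; norm_num]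
    exact Real.sqrt_le_sqrt (by norm_num)
  have hsqrt3' : 0 ≤ Real.sqrt 3 := Real.sqrt_nonneg _
  rw [ge_iff_le, div_le_iff₀ hr4]
  have hσr : 0 < σ^2 - r^2 := by nlinarith
  nlinarith [hkey, hσr, hsqrt3, hsqrt3', hP0]
end

section
/- Let Y be a random variable with values in [0, 1/2], and let r ∈ (0, 1/2) and A ≥ 0 satisfy Pr(Y > y) ≤ A for all y > r. Then E[Y^2] ≤ r^2 + A·sqrt((1/6 - (4/3)r^3)(1/2 - r)). -/
open MeasureTheory ProbabilityTheory

theorem stmt_5 {Ω : Type*} [MeasurableSpace Ω] (μ : Measure Ω) [IsProbabilityMeasure μ]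
    (Y : Ω → ℝ) (hY : Measurable Y) (hrange : ∀ ω, Y ω ∈ Set.Icc (0:ℝ) (1/2))
    (r : ℝ) (hr0 : 0 < r) (hr1 : r < 1/2)
    (A : ℝ) (hA : 0 ≤ A)
    (htail : ∀ y : ℝ, r < y → (μ {ω | y < Y ω}).toReal ≤ A) :
    (∫ ω, (Y ω)^2 ∂μ) ≤ r^2 + A * Real.sqrt ((1/6 - (4/3)*r^3) * (1/2 - r)) := by
  set S : Set Ω := {ω | r < Y ω} with hSdef
  have hSm : MeasurableSet S := measurableSet_lt measurable_const hY
  -- μ S ≤ A via monotone union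
  have hμS : (μ S).toReal ≤ A := by
    have hU : S = ⋃ n : ℕ, {ω | r + 1/(n+1) < Y ω} := by
      ext ω
      simp only [Set.mem_iUnion, Set.mem_setOf_eq, hSdef]
      constructor
      · intro h
        obtain ⟨n, hn⟩ := exists_nat_one_div_lt (sub_pos.mpr h)
        exact ⟨n, by push_cast at hn ⊢; linarith⟩
      · rintro ⟨n, hn⟩
        have : (0:ℝ) < 1/(n+1) := by positivity
        linarith
    have hmono : Monotone (fun n : ℕ => {ω | r + 1/(n+1) < Y ω}) := by
      intro m n hmn ω hω
      simp only [Set.mem_setOf_eq] at hω ⊢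
      have h1 : (1:ℝ)/(n+1) ≤ 1/(m+1) := by
        apply one_div_le_one_div_of_le (by positivity)
        exact_mod_cast by omega
      linarith
    have hle : μ S ≤ ENNReal.ofReal A := by
      rw [hU, hmono.directed_le.measure_iUnion]
      apply iSup_le
      intro n
      have h1 : (0:ℝ) < 1/(n+1) := by positivity
      have := htail (r + 1/(n+1)) (by linarith)
      rw [ENNReal.le_ofReal_iff_toReal_le (measure_ne_top μ _) hA]
      exact this
    exact ENNReal.toReal_le_of_le_ofReal hA hle
  -- pointwise bound
  set f : Ω → ℝ := fun ω => r^2 + (1/4 - r^2) * S.indicator (fun _ => (1:ℝ)) ω with hf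
  have hpt : ∀ ω, (Y ω)^2 ≤ f ω := by
    intro ω
    obtain ⟨h0, h2⟩ := hrange ω
    by_cases hω : ω ∈ S
    · simp only [hf, Set.indicator_of_mem hω]
      nlinarith
    · simp only [hf, Set.indicator_of_notMem hω]
      have : Y ω ≤ r := le_of_not_gt hω
      nlinarith
  have hI1 : Integrable (fun ω => (Y ω)^2) μ := by
    apply Integrable.mono' (integrable_const ((1:ℝ)/4))
      ((hY.pow_const 2).aestronglyMeasurable)
    filter_upwards with ω
    obtain ⟨h0, h2⟩ := hrange ω
    rw [Real.norm_eq_abs, abs_of_nonneg (by positivity)]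
    nlinarith
  have hIind : Integrable (S.indicator (fun _ => (1:ℝ))) μ := by
    exact (integrable_const (1:ℝ)).indicator hSm
  have hI2 : Integrable f μ := by
    exact (integrable_const (r^2)).add (hIind.const_mul _)
  have hmain : (∫ ω, (Y ω)^2 ∂μ) ≤ r^2 + (1/4 - r^2) * (μ S).toReal := by
    calc (∫ ω, (Y ω)^2 ∂μ) ≤ ∫ ω, f ω ∂μ := integral_mono hI1 hI2 hpt
      _ = r^2 + (1/4 - r^2) * (μ S).toReal := by
          rw [hf]
          rw [integral_add (integrable_const _) (hIind.const_mul _),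
            integral_const, integral_const_mul, integral_indicator_const _ hSm]
          simp [mul_comm, Measure.real]
  -- final arithmetic
  have hsq : 1/4 - r^2 ≤ Real.sqrt ((1/6 - (4/3)*r^3) * (1/2 - r)) := by
    rw [show (1:ℝ)/4 - r^2 = Real.sqrt ((1/4 - r^2)^2) by
      rw [Real.sqrt_sq (by nlinarith)]]
    apply Real.sqrt_le_sqrt
    nlinarith [sq_nonneg ((1 - 2*r)^2)]
  have h14 : (0:ℝ) ≤ 1/4 - r^2 := by nlinarith
  have hμ0 : (0:ℝ) ≤ (μ S).toReal := ENNReal.toReal_nonneg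
  calc (∫ ω, (Y ω)^2 ∂μ) ≤ r^2 + (1/4 - r^2) * (μ S).toReal := hmain
    _ ≤ r^2 + (1/4 - r^2) * A := by nlinarith
    _ ≤ r^2 + A * Real.sqrt ((1/6 - (4/3)*r^3) * (1/2 - r)) := by
        have := mul_le_mul_of_nonneg_left hsq hA
        linarith [this]
end

section
/- Under a quality ensured mechanism with ability threshold T > 1/2 and η = Pr(θ ≥ T) > 0: if the total number of drawn workers m' satisfies m' ≥ 2(1-η)log(2/δ)/η + 4log(2/δ)/((2T-1)^2 η) + 2/(3η), then majority voting over the labels of the workers whose ability is at least T is correct with probability at least 1 − δ. -/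
open MeasureTheory ProbabilityTheory

lemma aux_cosh (t : ℝ) (ht : 0 ≤ t) :
    (1 + t)/2 * Real.exp (-t) + (1 - t)/2 * Real.exp t ≤ 1 - t^2/2 := by
  set f : ℝ → ℝ := fun u => u * Real.sinh u - Real.cosh u + 1 - u^2/2 with hf
  have hder : ∀ u : ℝ, HasDerivAt f (u * (Real.cosh u - 1)) u := by
    intro u
    have h1 : HasDerivAt (fun u : ℝ => u * Real.sinh u)
        (1 * Real.sinh u + u * Real.cosh u) u :=
      (hasDerivAt_id u).mul (Real.hasDerivAt_sinh u)
    have h2 : HasDerivAt (fun u : ℝ => u^2/2) u u := by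
      have := (hasDerivAt_pow 2 u).div_const 2
      simpa using this
    have := ((h1.sub (Real.hasDerivAt_cosh u)).add_const 1).sub h2
    refine this.congr_deriv ?_
    ring
  have hmono : MonotoneOn f (Set.Ici (0:ℝ)) := by
    apply monotoneOn_of_deriv_nonneg (convex_Ici 0)
    · exact fun u _ => (hder u).differentiableAt.continuousAt.continuousWithinAt
    · exact fun u _ => (hder u).differentiableAt.differentiableWithinAt
    · intro u hu
      rw [interior_Ici] at hu
      rw [(hder u).deriv]
      have : 1 ≤ Real.cosh u := Real.one_le_cosh u
      nlinarith [le_of_lt (Set.mem_Ioi.mp hu)]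
  have h0 : f 0 ≤ f t := hmono (Set.self_mem_Ici) (Set.mem_Ici.mpr ht) ht
  have hf0 : f 0 = 0 := by simp [hf]
  rw [hf0] at h0
  have hft : f t = t * Real.sinh t - Real.cosh t + 1 - t^2/2 := rfl
  rw [Real.sinh_eq, Real.cosh_eq] at hft
  rw [hft] at h0
  nlinarith [h0]

theorem stmt_12 {Ω : Type*} [MeasurableSpace Ω] (μ : Measure Ω) [IsProbabilityMeasure μ]
    (m' : ℕ) (hm1 : 1 ≤ m')
    (θ : Fin m' → Ω → ℝ) (hθmeas : ∀ i, Measurable (θ i))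
    (a : Fin m' → Ω → ℝ) (hameas : ∀ i, Measurable (a i))
    (hval : ∀ i ω, a i ω = -1 ∨ a i ω = 1)
    (y : ℝ) (hy : y = -1 ∨ y = 1)
    -- the pairs (θ_i, a_i) are independent across workers
    (hindep : iIndepFun (fun i ω => (θ i ω, a i ω)) μ)
    -- abilities are identically distributed according to ν, supported on [0,1]
    (ν : Measure ℝ) [IsProbabilityMeasure ν]
    (hiid : ∀ i, Measure.map (θ i) μ = ν)
    (hsupp : ν (Set.Icc (0:ℝ) 1)ᶜ = 0)
    -- conditionally on θ_i, worker i is correct with probability θ_i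
    (hcond : ∀ i,
      μ[Set.indicator {ω | a i ω = y} (fun _ => (1:ℝ)) |
        MeasurableSpace.comap (θ i) inferInstance] =ᵐ[μ] θ i)
    -- the ability threshold and the probability of exceeding it
    (T : ℝ) (hT : 1/2 < T)
    (η : ℝ) (hη : ENNReal.ofReal η = ν {x | T ≤ x}) (hηpos : 0 < η)
    (δ : ℝ) (hδ0 : 0 < δ) (hδ1 : δ < 1)
    (hmbig : (m':ℝ) ≥ 2*(1-η)*Real.log (2/δ)/η + 4*Real.log (2/δ)/((2*T-1)^2*η)
        + 2/(3*η)) :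
    -- majority voting over the workers with ability at least T errs with prob ≤ δ
    (μ {ω | y * ∑ i, (if T ≤ θ i ω then a i ω else 0) < 0}).toReal ≤ δ := by
  have hyy : y * y = 1 := by rcases hy with h|h <;> simp [h]
  set t : ℝ := 2*T - 1 with htdef
  have ht0 : 0 < t := by rw [htdef]; linarith
  set ξ : Fin m' → Ω → ℝ := fun i ω => y * (if T ≤ θ i ω then a i ω else 0) with hξdef
  have hξmeas : ∀ i, Measurable (ξ i) := by
    intro i
    exact measurable_const.mul
      (Measurable.ite (measurableSet_le measurable_const (hθmeas i)) (hameas i)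
        measurable_const)
  have hξbdd : ∀ i ω, -1 ≤ ξ i ω ∧ ξ i ω ≤ 1 := by
    intro i ω
    rcases hy with h|h <;> rcases hval i ω with h'|h' <;>
      simp only [hξdef, h, h'] <;> split <;> norm_num
  -- independence of the ξ i
  have hξindep : iIndepFun ξ μ := by
    have := hindep.comp (fun _ (p : ℝ × ℝ) => y * (if T ≤ p.1 then p.2 else 0))
      (fun _ => measurable_const.mul
        (Measurable.ite (measurableSet_le measurable_const measurable_fst)
          measurable_snd measurable_const))
    exact this
  -- per-worker mgf bound
  have hmgf : ∀ i, mgf (ξ i) μ (-t) ≤ Real.exp (-(η * (t^2/2))) := by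
    intro i
    set s : Set Ω := {ω | T ≤ θ i ω} with hsdef
    have hs : MeasurableSet s := measurableSet_le measurable_const (hθmeas i)
    set A : Set Ω := {ω | a i ω = y} with hAdef
    have hA : MeasurableSet A := (hameas i) (measurableSet_singleton y)
    set c1 : ℝ := Real.exp (-t) with hc1
    set c2 : ℝ := Real.exp t with hc2
    have hc12 : c1 ≤ c2 := Real.exp_le_exp.mpr (by linarith)
    -- pointwise decomposition
    have hpt : ∀ ω, Real.exp (-t * ξ i ω) =
        (s ∩ A).indicator (fun _ => c1) ω + ((s \ A).indicator (fun _ => c2) ω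
          + sᶜ.indicator (fun _ => (1:ℝ)) ω) := by
      intro ω
      by_cases h1 : T ≤ θ i ω
      · by_cases h2 : a i ω = y
        · have hmem : ω ∈ s ∩ A := ⟨h1, h2⟩
          have h3 : ξ i ω = 1 := by simp [hξdef, h1, h2, hyy]
          simp [Set.indicator_apply, hmem, Set.mem_diff, Set.mem_compl_iff,
            hsdef, hAdef, h1, h2, h3, hc1]
        · have h2' : a i ω = -y := by
            rcases hval i ω with h|h <;> rcases hy with h'|h' <;> simp_all
          have h3 : ξ i ω = -1 := by
            simp only [hξdef, h1, if_pos, h2']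
            rw [mul_neg, hyy]
          simp [Set.indicator_apply, Set.mem_inter_iff, Set.mem_diff,
            Set.mem_compl_iff, hsdef, hAdef, h1, h2, h3, hc2]
      · have h3 : ξ i ω = 0 := by simp [hξdef, h1]
        simp [Set.indicator_apply, Set.mem_inter_iff, Set.mem_diff,
          Set.mem_compl_iff, hsdef, hAdef, h1, h3]
    -- probabilities
    have hμs : μ s = ENNReal.ofReal η := by
      have : μ s = ν (Set.Ici T) := by
        rw [← hiid i, Measure.map_apply (hθmeas i) measurableSet_Ici]
        rfl
      rw [this, hη]
      rfl
    have hμsr : (μ s).toReal = η := by rw [hμs, ENNReal.toReal_ofReal hηpos.le]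
    set p : ℝ := (μ (s ∩ A)).toReal with hp
    set q : ℝ := (μ (s \ A)).toReal with hq
    have hpq : p + q = η := by
      rw [hp, hq, ← ENNReal.toReal_add (measure_ne_top _ _) (measure_ne_top _ _),
        measure_inter_add_diff s hA, hμsr]
    have hr : (μ sᶜ).toReal = 1 - η := by
      have h := measure_add_measure_compl (μ := μ) hs
      rw [measure_univ] at h
      have := ENNReal.toReal_add (measure_ne_top μ s) (measure_ne_top μ sᶜ)
      rw [h] at this
      simp only [ENNReal.toReal_one] at this
      rw [hμsr] at this
      linarith [this.symm]
    -- conditional expectation: p = ∫_s θ i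
    have hm : MeasurableSpace.comap (θ i) inferInstance ≤ _ := (hθmeas i).comap_le
    have hsm : MeasurableSet[MeasurableSpace.comap (θ i) inferInstance] s :=
      ⟨Set.Ici T, measurableSet_Ici, rfl⟩
    have hint1 : Integrable (Set.indicator {ω | a i ω = y} (fun _ => (1:ℝ))) μ :=
      (integrable_const 1).indicator hA
    have hpeq : p = ∫ ω in s, θ i ω ∂μ := by
      have e1 : ∫ ω in s, Set.indicator {ω | a i ω = y} (fun _ => (1:ℝ)) ω ∂μ = p := by
        rw [setIntegral_indicator hA, setIntegral_const]
        simp [hp, measureReal_def]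
      have e2 : ∫ ω in s, Set.indicator {ω | a i ω = y} (fun _ => (1:ℝ)) ω ∂μ
          = ∫ ω in s, θ i ω ∂μ := by
        rw [← setIntegral_condExp hm hint1 hsm]
        exact integral_congr_ae (ae_restrict_of_ae (hcond i))
      rw [← e1, e2]
    -- θ i is a.e. in [0,1]
    have hθab : ∀ᵐ ω ∂μ, θ i ω ∈ Set.Icc (0:ℝ) 1 := by
      have h0 : μ (θ i ⁻¹' (Set.Icc (0:ℝ) 1)ᶜ) = 0 := by
        rw [← Measure.map_apply (hθmeas i) measurableSet_Icc.compl, hiid i]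
        exact hsupp
      rw [ae_iff]
      exact h0
    have hθint : Integrable (θ i) μ := by
      apply Integrable.mono' (integrable_const (1:ℝ)) (hθmeas i).aestronglyMeasurable
      filter_upwards [hθab] with ω h
      rw [Real.norm_eq_abs, abs_le]
      exact ⟨by linarith [h.1], h.2⟩
    have hTp : T * η ≤ p := by
      rw [hpeq]
      have e3 : ∫ _ω in s, T ∂μ = T * η := by
        rw [setIntegral_const, measureReal_def, hμsr, smul_eq_mul, mul_comm]
      rw [← e3]
      apply setIntegral_mono_on
      · exact (integrableOn_const_iff (C := T)).mpr (Or.inr (measure_lt_top μ s))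
      · exact hθint.integrableOn
      · exact hs
      · intro ω hω
        exact hω
    -- compute the mgf
    have hmgfeq : mgf (ξ i) μ (-t) = p * c1 + (q * c2 + (1 - η) * 1) := by
      have hdef : mgf (ξ i) μ (-t) = ∫ ω, Real.exp (-t * ξ i ω) ∂μ := rfl
      have i1 : Integrable (fun ω => (s ∩ A).indicator (fun _ => c1) ω) μ :=
        (integrable_const c1).indicator (hs.inter hA)
      have i2 : Integrable (fun ω => (s \ A).indicator (fun _ => c2) ω) μ :=
        (integrable_const c2).indicator (hs.diff hA)
      have i3 : Integrable (fun ω => sᶜ.indicator (fun _ => (1:ℝ)) ω) μ :=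
        (integrable_const (1:ℝ)).indicator hs.compl
      have i23 : Integrable (fun ω => (s \ A).indicator (fun _ => c2) ω
          + sᶜ.indicator (fun _ => (1:ℝ)) ω) μ := i2.add i3
      rw [hdef, integral_congr_ae (Filter.Eventually.of_forall hpt),
        integral_add i1 i23, integral_add i2 i3,
        integral_indicator_const _ (hs.inter hA), integral_indicator_const _ (hs.diff hA),
        integral_indicator_const _ hs.compl, measureReal_def, measureReal_def,
        measureReal_def, hr]
      simp [hp, hq, smul_eq_mul, mul_comm]
    -- analytic bound
    have haux : T * c1 + (1 - T) * c2 ≤ 1 - t^2/2 := by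
      have h := aux_cosh t ht0.le
      have e1 : (1 + t)/2 = T := by rw [htdef]; ring
      have e2 : (1 - t)/2 = 1 - T := by rw [htdef]; ring
      rw [e1, e2] at h
      exact h
    have hexp : 1 + -(η * (t^2/2)) ≤ Real.exp (-(η * (t^2/2))) := by
      have := Real.add_one_le_exp (-(η * (t^2/2)))
      linarith
    have hη1 : η ≤ 1 := by
      have h1 : ENNReal.ofReal η ≤ 1 := by rw [hη]; exact prob_le_one
      exact_mod_cast (ENNReal.ofReal_le_one).mp h1
    rw [hmgfeq]
    have hq' : q = η - p := by linarith
    rw [hq']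
    nlinarith [mul_nonneg (sub_nonneg.mpr hTp) (sub_nonneg.mpr hc12),
      mul_nonneg hηpos.le (sub_nonneg.mpr haux)]
  -- Chernoff bound
  set X : Ω → ℝ := fun ω => ∑ i, ξ i ω with hXdef
  have hXeq : X = ∑ i, ξ i := by
    funext ω
    simp [hXdef, Finset.sum_apply]
  have hXmeas : Measurable X := Finset.measurable_sum Finset.univ (fun i _ => hξmeas i)
  have hXlb : ∀ ω, -(m':ℝ) ≤ X ω := by
    intro ω
    have h := Finset.sum_le_sum (fun i (_ : i ∈ Finset.univ) => (hξbdd i ω).1)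
    calc -(m':ℝ) = ∑ _i : Fin m', (-1:ℝ) := by simp
    _ ≤ ∑ i, ξ i ω := h
  have hint : Integrable (fun ω => Real.exp (-t * X ω)) μ := by
    apply Integrable.mono' (integrable_const (Real.exp (t * m')))
      ((hXmeas.const_mul (-t)).exp.aestronglyMeasurable)
    filter_upwards with ω
    rw [Real.norm_eq_abs, abs_of_pos (Real.exp_pos _), Real.exp_le_exp]
    nlinarith [hXlb ω, ht0.le]
  have hch := measure_le_le_exp_mul_mgf (μ := μ) (X := X) 0 (neg_nonpos.mpr ht0.le) hint
  simp only [mul_zero, Real.exp_zero, one_mul, neg_mul, neg_zero] at hch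
  -- the error set is contained in {X ≤ 0}
  have hsub : {ω | y * ∑ i, (if T ≤ θ i ω then a i ω else 0) < 0} ⊆ {ω | X ω ≤ 0} := by
    intro ω hω
    simp only [Set.mem_setOf_eq] at hω ⊢
    have : y * ∑ i, (if T ≤ θ i ω then a i ω else 0) = X ω := by
      rw [hXdef, Finset.mul_sum]
    linarith [this ▸ hω]
  have hmono : (μ {ω | y * ∑ i, (if T ≤ θ i ω then a i ω else 0) < 0}).toReal
      ≤ (μ {ω | X ω ≤ 0}).toReal :=
    ENNReal.toReal_mono (measure_ne_top _ _) (measure_mono hsub)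
  -- product bound
  have hprod : mgf X μ (-t) ≤ Real.exp (-(η * (t^2/2))) ^ m' := by
    rw [hXeq, hξindep.mgf_sum hξmeas Finset.univ]
    calc ∏ i, mgf (ξ i) μ (-t) ≤ ∏ _i : Fin m', Real.exp (-(η * (t^2/2))) :=
          Finset.prod_le_prod (fun i _ => mgf_nonneg) (fun i _ => hmgf i)
    _ = Real.exp (-(η * (t^2/2))) ^ m' := by simp
  have hpow : Real.exp (-(η * (t^2/2))) ^ m' = Real.exp ((m':ℝ) * -(η * (t^2/2))) :=
    (Real.exp_nat_mul _ m').symm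
  -- final arithmetic
  have hL : (0:ℝ) < Real.log (2/δ) := Real.log_pos (by rw [lt_div_iff₀ hδ0]; linarith)
  have hη1 : η ≤ 1 := by
    have h1 : ENNReal.ofReal η ≤ 1 := by rw [hη]; exact prob_le_one
    exact_mod_cast (ENNReal.ofReal_le_one).mp h1
  have hmbig' : (m':ℝ) ≥ 4*Real.log (2/δ)/(t^2*η) := by
    have h1 : 0 ≤ 2*(1-η)*Real.log (2/δ)/η :=
      div_nonneg (by nlinarith) hηpos.le
    have h2 : (0:ℝ) ≤ 2/(3*η) := by positivity
    linarith [hmbig]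
  have hkey : 2 * Real.log (2/δ) ≤ (m':ℝ) * (η * (t^2/2)) := by
    have heq : 4*Real.log (2/δ)/(t^2*η) * (η * (t^2/2)) = 2 * Real.log (2/δ) := by
      field_simp
      ring
    calc 2 * Real.log (2/δ) = 4*Real.log (2/δ)/(t^2*η) * (η * (t^2/2)) := heq.symm
    _ ≤ (m':ℝ) * (η * (t^2/2)) := by
        apply mul_le_mul_of_nonneg_right hmbig'
        positivity
  have hlogδ : Real.log δ ≤ 0 := Real.log_nonpos hδ0.le hδ1.le
  have hlog2 : (0:ℝ) ≤ Real.log 2 := Real.log_nonneg (by norm_num)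
  have hlogdiv : Real.log (2/δ) = Real.log 2 - Real.log δ := Real.log_div (by norm_num) hδ0.ne'
  have hfinal : Real.exp ((m':ℝ) * -(η * (t^2/2))) ≤ δ := by
    rw [← Real.exp_log hδ0]
    apply Real.exp_le_exp.mpr
    have : (m':ℝ) * -(η * (t^2/2)) = -((m':ℝ) * (η * (t^2/2))) := by ring
    rw [this]
    rw [hlogdiv] at hkey
    linarith
  calc (μ {ω | y * ∑ i, (if T ≤ θ i ω then a i ω else 0) < 0}).toReal
      ≤ (μ {ω | X ω ≤ 0}).toReal := hmono
  _ ≤ mgf X μ (-t) := hch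
  _ ≤ Real.exp (-(η * (t^2/2))) ^ m' := hprod
  _ = Real.exp ((m':ℝ) * -(η * (t^2/2))) := hpow
  _ ≤ δ := hfinal
end

section
/- Let the crowd ability distribution have mean μ > 1/2 and variance σ^2 > 0, with Pr(θ < μ − 1/2) = 0. Set r = (1/2)√(1 − √(1 − 4σ^2)), T = μ + r, and γ = Pr(θ ≤ μ − r)/Pr(θ ≥ μ + r). Then Pr(θ ≥ T) ≥ (1/(1+γ)) · √3(σ^2 − r^2)/(1 − 4r^2), and consequently 1/((2T−1)^2 · Pr(θ ≥ T)) ≤ (1+γ)(1 + √(1−4σ^2))^2 / (√3 σ^2 (2σ^2 + (2μ−1))^2). -/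
open MeasureTheory ProbabilityTheory

set_option maxHeartbeats 1000000 in
theorem stmt_13 {Ω : Type*} [MeasurableSpace Ω] (μ : Measure Ω) [IsProbabilityMeasure μ]
    (θ : Ω → ℝ) (hθ : Measurable θ) (hrange : ∀ ω, θ ω ∈ Set.Icc (0:ℝ) 1)
    (μm σ : ℝ) (hμm : μm = ∫ ω, θ ω ∂μ) (hμhalf : 1/2 < μm)
    (hσ : 0 < σ) (hvar : variance θ μ = σ^2)
    (hlow : μ {ω | θ ω < μm - 1/2} = 0)
    (r T γ : ℝ)
    (hr : r = (1/2) * Real.sqrt (1 - Real.sqrt (1 - 4*σ^2)))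
    (hT : T = μm + r)
    (hup : 0 < (μ {ω | μm + r ≤ θ ω}).toReal)
    (hγ : γ = (μ {ω | θ ω ≤ μm - r}).toReal / (μ {ω | μm + r ≤ θ ω}).toReal) :
    (μ {ω | T ≤ θ ω}).toReal ≥ (1/(1+γ)) * (Real.sqrt 3 * (σ^2 - r^2) / (1 - 4*r^2)) ∧
    1 / ((2*T - 1)^2 * (μ {ω | T ≤ θ ω}).toReal) ≤
      (1+γ) * (1 + Real.sqrt (1 - 4*σ^2))^2 /
        (Real.sqrt 3 * σ^2 * (2*σ^2 + (2*μm - 1))^2) := by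
  have hmem2 : MemLp θ 2 μ :=
    memLp_of_bounded (ae_of_all _ hrange) hθ.aestronglyMeasurable 2
  have hmem1 : MemLp θ 1 μ :=
    memLp_of_bounded (ae_of_all _ hrange) hθ.aestronglyMeasurable 1
  have hint : Integrable θ μ := memLp_one_iff_integrable.1 hmem1
  have hintsq : Integrable (fun ω => θ ω ^ 2) μ := by
    have hb : ∀ ω, θ ω ^ 2 ∈ Set.Icc (0:ℝ) 1 := fun ω =>
      Set.mem_Icc.2 ⟨sq_nonneg _, by nlinarith [(hrange ω).1, (hrange ω).2]⟩
    exact memLp_one_iff_integrable.1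
      (memLp_of_bounded (ae_of_all _ hb) (hθ.pow_const 2).aestronglyMeasurable 1)
  -- σ² < 1/4
  have hsq_le : ∫ ω, θ ω ^ 2 ∂μ ≤ μm := by
    rw [hμm]
    exact integral_mono hintsq hint fun ω => by nlinarith [(hrange ω).1, (hrange ω).2]
  have hvdef : σ^2 = ∫ ω, θ ω ^ 2 ∂μ - μm ^ 2 := by
    rw [← hvar, variance_eq_sub hmem2, hμm]; rfl
  have hσlt : σ^2 < 1/4 := by nlinarith
  set s := Real.sqrt (1 - 4*σ^2) with hs
  have hs_sq : s^2 = 1 - 4*σ^2 := Real.sq_sqrt (by nlinarith)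
  have hs_pos : 0 < s := Real.sqrt_pos.2 (by nlinarith)
  have hs_lt1 : s < 1 := by nlinarith [hs_sq, hs_pos, sq_nonneg σ]
  have hr2 : r^2 = (1-s)/4 := by
    rw [hr, mul_pow, Real.sq_sqrt (by nlinarith)]; ring
  have hrpos : 0 < r := by
    rw [hr]
    exact mul_pos (by norm_num) (Real.sqrt_pos.2 (by linarith))
  have h14r : 1 - 4*r^2 = s := by linarith
  have hσ2r : σ^2 = r^2 * (1+s) := by linear_combination (1/4)*hs_sq - (1+s)*hr2
  have hσmr : σ^2 - r^2 = s * r^2 := by linear_combination hσ2r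
  have hrltσ : r < σ := by nlinarith [hσmr, mul_pos hs_pos (mul_pos hrpos hrpos)]
  have hσhalf : σ < 1/2 := by nlinarith
  -- a.e. bound
  have hlow' : ∀ᵐ ω ∂μ, μm - 1/2 ≤ θ ω := by
    rw [ae_iff]
    simp only [not_le]
    exact hlow
  have habs : ∀ᵐ ω ∂μ, (θ ω - μm)^2 ≤ 1/4 := by
    filter_upwards [hlow'] with ω hω
    nlinarith [(hrange ω).2]
  -- sets
  set L : Set Ω := {ω | θ ω ≤ μm - r} with hL
  set U : Set Ω := {ω | μm + r ≤ θ ω} with hU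
  have hLmeas : MeasurableSet L := measurableSet_le hθ measurable_const
  have hUmeas : MeasurableSet U := measurableSet_le measurable_const hθ
  have hdisj : Disjoint L U := by
    rw [Set.disjoint_left]
    intro ω h1 h2
    simp only [hL, hU, Set.mem_setOf_eq] at h1 h2
    linarith
  set A : Set Ω := L ∪ U with hA
  have hAmeas : MeasurableSet A := hLmeas.union hUmeas
  -- integral bound
  have hvarint : ∫ ω, (θ ω - μm)^2 ∂μ = σ^2 := by
    rw [← hvar, variance_eq_integral hθ.aemeasurable, ← hμm]
  have hf_int : Integrable (fun ω => (θ ω - μm)^2) μ := by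
    refine Integrable.mono' (integrable_const (1/4 : ℝ))
      ((hθ.sub measurable_const).pow_const 2).aestronglyMeasurable ?_
    filter_upwards [habs] with ω hω
    rwa [Real.norm_eq_abs, abs_of_nonneg (sq_nonneg _)]
  have hg_int : Integrable (fun ω => r^2 + A.indicator (fun _ => 1/4 - r^2) ω) μ :=
    (integrable_const _).add ((integrable_indicator_iff hAmeas).2
      (integrableOn_const (measure_ne_top _ _)))
  have hfg : ∀ᵐ ω ∂μ, (θ ω - μm)^2 ≤ r^2 + A.indicator (fun _ => 1/4 - r^2) ω := by
    filter_upwards [habs] with ω hω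
    by_cases hmem : ω ∈ A
    · rw [Set.indicator_of_mem hmem]; linarith
    · rw [Set.indicator_of_notMem hmem]
      simp only [hA, Set.mem_union, hL, hU, Set.mem_setOf_eq, not_or, not_le] at hmem
      nlinarith [hmem.1, hmem.2]
  have hintg : ∫ ω, (r^2 + A.indicator (fun _ => 1/4 - r^2) ω) ∂μ
      = r^2 + (1/4 - r^2) * (μ A).toReal := by
    rw [integral_add (integrable_const _) ((integrable_indicator_iff hAmeas).2
      (integrableOn_const (measure_ne_top _ _)))]
    rw [integral_const, integral_indicator_const _ hAmeas]
    simp [mul_comm, measureReal_def]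
  have hkey : σ^2 ≤ r^2 + (1/4 - r^2) * (μ A).toReal := by
    rw [← hvarint, ← hintg]
    exact integral_mono_ae hf_int hg_int hfg
  -- measure arithmetic
  have hAsplit : (μ A).toReal = (μ L).toReal + (μ U).toReal := by
    rw [hA, measure_union hdisj hUmeas, ENNReal.toReal_add (measure_ne_top _ _) (measure_ne_top _ _)]
  have hLγ : (μ L).toReal = γ * (μ U).toReal := by
    rw [hγ]; field_simp
  have hγ0 : 0 ≤ γ := by
    rw [hγ]; positivity
  have h1γ : 0 < 1 + γ := by linarith
  have hmain : 4 * r^2 ≤ (1+γ) * (μ U).toReal := by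
    rw [hAsplit, hLγ] at hkey
    have h14 : 1/4 - r^2 = s/4 := by linarith
    rw [h14] at hkey
    nlinarith
  have hsqrt3 : Real.sqrt 3 ≤ 2 := by
    nlinarith [Real.sq_sqrt (by norm_num : (0:ℝ) ≤ 3), Real.sqrt_nonneg 3]
  have hsqrt3pos : 0 < Real.sqrt 3 := Real.sqrt_pos.2 (by norm_num)
  have hTU : {ω | T ≤ θ ω} = U := by rw [hT]
  rw [hTU]
  have hUr := hup
  have goal1 : (μ U).toReal ≥ (1/(1+γ)) * (Real.sqrt 3 * (σ^2 - r^2) / (1 - 4*r^2)) := by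
    rw [hσmr, h14r]
    have hexp : (1/(1+γ)) * (Real.sqrt 3 * (s * r^2) / s) = Real.sqrt 3 * r^2 / (1+γ) := by
      field_simp
    rw [hexp, ge_iff_le, div_le_iff₀ h1γ]
    nlinarith
  refine ⟨goal1, ?_⟩
  -- second inequality
  have h2T : 2*T - 1 = 2*r + (2*μm - 1) := by rw [hT]; ring
  have hμm1 : 0 < 2*μm - 1 := by linarith
  have halg : σ^2 * (2*σ^2 + (2*μm-1))^2 ≤ (1+s)^2 * r^2 * (2*r + (2*μm-1))^2 := by
    have hab : r * (2*σ^2 + (2*μm-1)) ≤ σ * (2*r + (2*μm-1)) := by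
      nlinarith [mul_nonneg (mul_nonneg hrpos.le hσ.le) (by linarith : (0:ℝ) ≤ 1-σ),
        mul_nonneg hμm1.le (by linarith : (0:ℝ) ≤ σ - r)]
    have ha0 : 0 ≤ r * (2*σ^2 + (2*μm-1)) := by positivity
    have hsq2 : (r * (2*σ^2 + (2*μm-1)))^2 ≤ (σ * (2*r + (2*μm-1)))^2 :=
      pow_le_pow_left₀ ha0 hab 2
    have h' := mul_le_mul_of_nonneg_left hsq2 (show (0:ℝ) ≤ 1+s by linarith)
    calc σ^2 * (2*σ^2 + (2*μm-1))^2
        = (1+s) * (r * (2*σ^2 + (2*μm-1)))^2 := by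
          linear_combination ((2*σ^2+(2*μm-1))^2) * hσ2r
      _ ≤ (1+s) * (σ * (2*r + (2*μm-1)))^2 := h'
      _ = (1+s)^2 * r^2 * (2*r + (2*μm-1))^2 := by
          linear_combination ((1+s)*(2*r+(2*μm-1))^2) * hσ2r
  have hpos1 : 0 < (2*T-1)^2 * (μ U).toReal := by
    have : 0 < (2*T-1)^2 := by rw [h2T]; positivity
    positivity
  have hpos2 : 0 < Real.sqrt 3 * σ^2 * (2*σ^2 + (2*μm-1))^2 := by positivity
  rw [div_le_div_iff₀ hpos1 hpos2]
  have hstep : Real.sqrt 3 * r^2 ≤ (1+γ) * (μ U).toReal := by nlinarith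
  calc 1 * (Real.sqrt 3 * σ^2 * (2*σ^2 + (2*μm-1))^2)
      ≤ Real.sqrt 3 * ((1+s)^2 * r^2 * (2*r + (2*μm-1))^2) := by
        rw [one_mul, mul_assoc]
        exact mul_le_mul_of_nonneg_left halg (le_of_lt hsqrt3pos)
    _ = (Real.sqrt 3 * r^2) * ((1+s)^2 * (2*r + (2*μm-1))^2) := by ring
    _ ≤ ((1+γ) * (μ U).toReal) * ((1+s)^2 * (2*r + (2*μm-1))^2) := by
        apply mul_le_mul_of_nonneg_right hstep
        positivity
    _ = (1+γ) * (1+s)^2 * ((2*T-1)^2 * (μ U).toReal) := by rw [h2T]; ring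
end
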